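/- arXiv:1811.03113 — 2 statements merged into one kernel-verified Lean document; each statement's English description precedes it below -/
import Mathlib

section
/- Von Neumann entropy is subadditive: for any density matrix ρ on ℂ^n ⊗ ℂ^m with reduced density matrices ρ₁ = Tr₂ ρ and ρ₂ = Tr₁ ρ, one has S(ρ) ≤ S(ρ₁) + S(ρ₂). -/
/-!
Diagonalize the marginals, `ρ₁ = U₁ D₁ U₁*` and `ρ₂ = U₂ D₂ U₂*`, and let `p` be the diagonal of `ρ`
in the product basis `V = U₁ ⊗ U₂`. Partial traces commute with local unitary conjugation, so `p` is
a probability distribution on pairs whose marginals are the spectra of `ρ₁` and `ρ₂`. If `W` is an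
eigenbasis of `ρ`, the doubly stochastic matrix `|(V* W)ᵢⱼ|²` carries the spectrum of `ρ` to `p`,
so concavity of `x ↦ -x log x` gives `S(ρ) ≤ H(p)`; classical subadditivity `H(p) ≤ H(p₁) + H(p₂)`
(Gibbs' inequality against `p₁ ⊗ p₂`) finishes the proof.
-/

open scoped Kronecker ComplexOrder

/-- A density matrix: positive semidefinite with trace 1. -/
def IsDensityMatrix {d : Type*} [Fintype d] (ρ : Matrix d d ℂ) : Prop :=
  ρ.PosSemidef ∧ ρ.trace = 1

/-- The rank-one outer product `|ψ⟩⟨ψ|` of a vector. -/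
noncomputable def outerProd {d : Type*} (ψ : d → ℂ) : Matrix d d ℂ :=
  Matrix.vecMulVec ψ (star ψ)

/-- Partial trace over the second tensor factor. -/
noncomputable def ptrace₂ {α β : Type*} [Fintype β] (σ : Matrix (α × β) (α × β) ℂ) :
    Matrix α α ℂ :=
  Matrix.of fun i i' => ∑ j, σ (i, j) (i', j)

/-- Partial trace over the first tensor factor. -/
noncomputable def ptrace₁ {α β : Type*} [Fintype α] (σ : Matrix (α × β) (α × β) ℂ) :
    Matrix β β ℂ :=
  Matrix.of fun j j' => ∑ i, σ (i, j) (i, j')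

/-- Von Neumann entropy `S(ρ) = -∑ λᵢ log λᵢ` over the eigenvalues of `ρ`. -/
noncomputable def vnEntropy {d : Type*} [Fintype d] [DecidableEq d] (ρ : Matrix d d ℂ) : ℝ :=
  if h : ρ.IsHermitian then ∑ i, Real.negMulLog (h.eigenvalues i) else 0

open Matrix Real

theorem Real.negMulLog_le_neg_mul_log_add_sub {p q : ℝ} (hp : 0 ≤ p) (hq : 0 < q) :
    negMulLog p ≤ -(p * log q) + (q - p) := by
  rcases hp.eq_or_lt with rfl | hp
  · simpa using hq.le
  · have h := mul_le_mul_of_nonneg_left (log_le_sub_one_of_pos (div_pos hq hp)) hp.le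
    rw [log_div hq.ne' hp.ne', mul_sub, mul_sub, mul_div_cancel₀ _ hp.ne'] at h
    rw [negMulLog]
    linarith

theorem Real.sum_negMulLog_le_sum_negMulLog_marginals {ι κ : Type*} [Fintype ι] [Fintype κ]
    (p : ι × κ → ℝ) (hp : ∀ x, 0 ≤ p x) (hsum : ∑ x, p x = 1) :
    ∑ x, negMulLog (p x) ≤ ∑ i, negMulLog (∑ j, p (i, j)) + ∑ j, negMulLog (∑ i, p (i, j)) := by
  set a := fun i => ∑ j, p (i, j)
  set b := fun j => ∑ i, p (i, j)
  have le_a (x : ι × κ) : p x ≤ a x.1 :=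
    Finset.single_le_sum (f := fun j => p (x.1, j)) (fun j _ => hp _) (Finset.mem_univ x.2)
  have le_b (x : ι × κ) : p x ≤ b x.2 :=
    Finset.single_le_sum (f := fun i => p (i, x.2)) (fun i _ => hp _) (Finset.mem_univ x.1)
  have pointwise (x : ι × κ) : negMulLog (p x) ≤
      -(p x * log (a x.1)) + -(p x * log (b x.2)) + (a x.1 * b x.2 - p x) := by
    rcases (hp x).eq_or_lt with h | h
    · rw [← h]
      simpa using mul_nonneg (h.le.trans (le_a x)) (h.le.trans (le_b x))
    · have ha := h.trans_le (le_a x)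
      have hb := h.trans_le (le_b x)
      have := negMulLog_le_neg_mul_log_add_sub (hp x) (mul_pos ha hb)
      rwa [log_mul ha.ne' hb.ne', mul_add, neg_add] at this
  have entropy_a : ∑ i, negMulLog (a i) = ∑ x : ι × κ, -(p x * log (a x.1)) := by
    simp [a, negMulLog, Fintype.sum_prod_type, Finset.sum_mul]
  have entropy_b : ∑ j, negMulLog (b j) = ∑ x : ι × κ, -(p x * log (b x.2)) := by
    rw [Fintype.sum_prod_type, Finset.sum_comm]
    simp [b, negMulLog, Finset.sum_mul]
  have sum_ab : ∑ x : ι × κ, a x.1 * b x.2 = 1 := by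
    rw [Fintype.sum_prod_type, ← Finset.sum_mul_sum, Finset.sum_comm (f := fun i j => p (j, i))]
    simp only [a, ← Fintype.sum_prod_type, hsum, mul_one]
  calc ∑ x, negMulLog (p x)
      ≤ ∑ x, (-(p x * log (a x.1)) + -(p x * log (b x.2)) + (a x.1 * b x.2 - p x)) :=
        Finset.sum_le_sum fun x _ => pointwise x
    _ = ∑ i, negMulLog (a i) + ∑ j, negMulLog (b j) := by
        rw [Finset.sum_add_distrib, Finset.sum_add_distrib, Finset.sum_sub_distrib, sum_ab, hsum,
          entropy_a, entropy_b]
        ring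

theorem Real.sum_negMulLog_le_sum_negMulLog_mulVec {d : Type*} [Fintype d] [DecidableEq d]
    {B : Matrix d d ℝ} (hB : B ∈ doublyStochastic ℝ d) {v : d → ℝ} (hv : ∀ k, 0 ≤ v k) :
    ∑ k, negMulLog (v k) ≤ ∑ x, negMulLog ((B *ᵥ v) x) :=
  calc ∑ k, negMulLog (v k)
      = ∑ x, ∑ k, B x k • negMulLog (v k) := by
        rw [Finset.sum_comm]
        simp only [smul_eq_mul, ← Finset.sum_mul, sum_col_of_mem_doublyStochastic hB, one_mul]
    _ ≤ ∑ x, negMulLog (∑ k, B x k • v k) := Finset.sum_le_sum fun x _ =>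
        concaveOn_negMulLog.le_map_sum (fun k _ => nonneg_of_mem_doublyStochastic hB)
          (sum_row_of_mem_doublyStochastic hB x) (fun k _ => hv k)
    _ = ∑ x, negMulLog ((B *ᵥ v) x) := by simp [mulVec, dotProduct]

namespace Matrix

variable {d : Type*} [Fintype d] [DecidableEq d]

theorem of_normSq_mem_doublyStochastic {U : Matrix d d ℂ} (hU : U ∈ unitary (Matrix d d ℂ)) :
    of (fun i j => Complex.normSq (U i j)) ∈ doublyStochastic ℝ d := by
  have row (i : d) : ∑ j, Complex.normSq (U i j) = 1 := by
    have h : (U * star U) i i = 1 := by rw [Unitary.mul_star_self_of_mem hU, one_apply_eq]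
    simp only [mul_apply, star_apply, Complex.star_def, Complex.mul_conj] at h
    exact_mod_cast h
  have col (j : d) : ∑ i, Complex.normSq (U i j) = 1 := by
    have h : (star U * U) j j = 1 := by rw [Unitary.star_mul_self_of_mem hU, one_apply_eq]
    simp only [mul_apply, star_apply, Complex.star_def, mul_comm _ (U _ _),
      Complex.mul_conj] at h
    exact_mod_cast h
  exact mem_doublyStochastic_iff_sum.mpr ⟨fun i j => Complex.normSq_nonneg _, row, col⟩

theorem mul_diagonal_mul_star_apply_self (M : Matrix d d ℂ) (v : d → ℝ) (x : d) :
    (M * diagonal (RCLike.ofReal ∘ v) * star M : Matrix d d ℂ) x x =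
      ((of fun i j => Complex.normSq (M i j)) *ᵥ v) x := by
  rw [mul_apply]
  simp only [mul_diagonal, star_apply, mulVec, dotProduct, of_apply, Complex.ofReal_sum,
    Complex.ofReal_mul, Complex.star_def, Function.comp_apply]
  refine Finset.sum_congr rfl fun k _ => ?_
  rw [mul_right_comm, Complex.mul_conj]
  simp

end Matrix

section Entropy

variable {d : Type*} [Fintype d] [DecidableEq d] {A : Matrix d d ℂ}

theorem Matrix.IsHermitian.vnEntropy_eq_sum_negMulLog_diag (hA : A.IsHermitian) :
    vnEntropy A = ∑ i, negMulLog ((star (hA.eigenvectorUnitary : Matrix d d ℂ) * A *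
      hA.eigenvectorUnitary) i i).re := by
  have hdiag := hA.conjStarAlgAut_star_eigenvectorUnitary
  rw [Unitary.conjStarAlgAut_star_apply] at hdiag
  simp [hdiag, vnEntropy, dif_pos hA]

theorem Matrix.PosSemidef.vnEntropy_le_sum_negMulLog_diag (hA : A.PosSemidef) {V : Matrix d d ℂ}
    (hV : V ∈ unitary (Matrix d d ℂ)) :
    vnEntropy A ≤ ∑ x, negMulLog ((star V * A * V) x x).re := by
  set U : Matrix d d ℂ := ↑hA.1.eigenvectorUnitary
  have hconj : star V * A * V = star V * U * diagonal (RCLike.ofReal ∘ hA.1.eigenvalues) *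
      star (star V * U) := by
    conv_lhs => rw [hA.1.spectral_theorem]
    simp [U, star_mul, mul_assoc]
  rw [vnEntropy, dif_pos hA.1]
  have hB := of_normSq_mem_doublyStochastic
    (mul_mem (Unitary.star_mem hV) hA.1.eigenvectorUnitary.prop)
  refine (sum_negMulLog_le_sum_negMulLog_mulVec hB hA.eigenvalues_nonneg).trans_eq ?_
  simp only [hconj, mul_diagonal_mul_star_apply_self, Complex.ofReal_re, U]

end Entropy

section PartialTrace

theorem ptrace₁_eq_ptrace₂_submatrix_swap {α β : Type*} [Fintype α]
    (σ : Matrix (α × β) (α × β) ℂ) :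
    ptrace₁ σ = ptrace₂ (σ.submatrix Prod.swap Prod.swap) :=
  rfl

theorem Matrix.IsHermitian.ptrace₂ {α β : Type*} [Fintype β] {σ : Matrix (α × β) (α × β) ℂ}
    (hσ : σ.IsHermitian) : (ptrace₂ σ).IsHermitian := by
  ext i i'
  exact (star_sum _ _).trans (Finset.sum_congr rfl fun j _ => hσ.apply _ _)

theorem Matrix.IsHermitian.ptrace₁ {α β : Type*} [Fintype α] {σ : Matrix (α × β) (α × β) ℂ}
    (hσ : σ.IsHermitian) : (ptrace₁ σ).IsHermitian :=
  (hσ.submatrix Prod.swap).ptrace₂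

variable {α β : Type*} [Fintype α] [Fintype β]

theorem ptrace₂_kronecker_one_mul [DecidableEq β] (A : Matrix α α ℂ)
    (σ : Matrix (α × β) (α × β) ℂ) :
    ptrace₂ ((A ⊗ₖ (1 : Matrix β β ℂ)) * σ) = A * ptrace₂ σ := by
  ext i i'
  simp only [ptrace₂, of_apply, mul_apply, Fintype.sum_prod_type, kroneckerMap_apply, one_apply,
    mul_ite, mul_one, mul_zero, ite_mul, zero_mul, Finset.sum_ite_eq, Finset.mem_univ, if_true,
    Finset.mul_sum]
  exact Finset.sum_comm

theorem ptrace₂_mul_kronecker_one [DecidableEq β] (σ : Matrix (α × β) (α × β) ℂ)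
    (A : Matrix α α ℂ) :
    ptrace₂ (σ * (A ⊗ₖ (1 : Matrix β β ℂ))) = ptrace₂ σ * A := by
  ext i i'
  simp only [ptrace₂, of_apply, mul_apply, Fintype.sum_prod_type, kroneckerMap_apply, one_apply,
    mul_ite, mul_one, mul_zero, Finset.sum_ite_eq', Finset.mem_univ, if_true, Finset.sum_mul]
  exact Finset.sum_comm

theorem ptrace₂_one_kronecker_mul_comm [DecidableEq α] (B : Matrix β β ℂ)
    (σ : Matrix (α × β) (α × β) ℂ) :
    ptrace₂ (((1 : Matrix α α ℂ) ⊗ₖ B) * σ) = ptrace₂ (σ * ((1 : Matrix α α ℂ) ⊗ₖ B)) := by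
  ext i i'
  simp only [ptrace₂, of_apply, mul_apply, Fintype.sum_prod_type_right, kroneckerMap_apply,
    one_apply, ite_mul, one_mul, zero_mul, mul_ite, mul_zero, Finset.sum_ite_eq,
    Finset.sum_ite_eq', Finset.mem_univ, if_true]
  rw [Finset.sum_comm]
  simp only [mul_comm]

theorem ptrace₂_star_kronecker_mul_mul_kronecker [DecidableEq α] [DecidableEq β]
    (U₁ : Matrix α α ℂ) {U₂ : Matrix β β ℂ} (hU₂ : U₂ ∈ unitary (Matrix β β ℂ))
    (σ : Matrix (α × β) (α × β) ℂ) :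
    ptrace₂ (star (U₁ ⊗ₖ U₂) * σ * (U₁ ⊗ₖ U₂)) = star U₁ * ptrace₂ σ * U₁ := by
  have kronecker_eq_left_mul_right (A : Matrix α α ℂ) (B : Matrix β β ℂ) :
      A ⊗ₖ B = (A ⊗ₖ 1) * (1 ⊗ₖ B) := by
    rw [← mul_kronecker_mul, mul_one, one_mul]
  have kronecker_eq_right_mul_left (A : Matrix α α ℂ) (B : Matrix β β ℂ) :
      A ⊗ₖ B = (1 ⊗ₖ B) * (A ⊗ₖ 1) := by
    rw [← mul_kronecker_mul, mul_one, one_mul]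
  calc ptrace₂ (star (U₁ ⊗ₖ U₂) * σ * (U₁ ⊗ₖ U₂))
      = ptrace₂ ((star U₁ ⊗ₖ 1) * ((1 ⊗ₖ star U₂) * (σ * (1 ⊗ₖ U₂))) * (U₁ ⊗ₖ 1)) := by
        rw [star_eq_conjTranspose, conjTranspose_kronecker, kronecker_eq_left_mul_right,
          kronecker_eq_right_mul_left U₁]
        simp only [star_eq_conjTranspose, mul_assoc]
    _ = star U₁ * ptrace₂ (σ * (1 ⊗ₖ U₂) * (1 ⊗ₖ star U₂)) * U₁ := by
        rw [ptrace₂_mul_kronecker_one, ptrace₂_kronecker_one_mul, ptrace₂_one_kronecker_mul_comm,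
          mul_assoc σ]
    _ = star U₁ * ptrace₂ σ * U₁ := by
        rw [mul_assoc σ, ← mul_kronecker_mul, Unitary.mul_star_self_of_mem hU₂, mul_one,
          one_kronecker_one, mul_one]

theorem ptrace₁_star_kronecker_mul_mul_kronecker [DecidableEq α] [DecidableEq β]
    {U₁ : Matrix α α ℂ} (hU₁ : U₁ ∈ unitary (Matrix α α ℂ)) (U₂ : Matrix β β ℂ)
    (σ : Matrix (α × β) (α × β) ℂ) :
    ptrace₁ (star (U₁ ⊗ₖ U₂) * σ * (U₁ ⊗ₖ U₂)) = star U₂ * ptrace₁ σ * U₂ := by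
  have swap_kronecker : (U₁ ⊗ₖ U₂).submatrix Prod.swap Prod.swap = U₂ ⊗ₖ U₁ := by
    ext x y
    exact mul_comm _ _
  rw [ptrace₁_eq_ptrace₂_submatrix_swap, ptrace₁_eq_ptrace₂_submatrix_swap,
    ← ptrace₂_star_kronecker_mul_mul_kronecker U₂ hU₁, ← swap_kronecker, ← Equiv.coe_prodComm,
    star_eq_conjTranspose, star_eq_conjTranspose, conjTranspose_submatrix, submatrix_mul_equiv,
    submatrix_mul_equiv]

end PartialTrace

/-- Subadditivity of von Neumann entropy: `S(ρ) ≤ S(ρ₁) + S(ρ₂)` for the two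
reduced density matrices of a bipartite density matrix `ρ`. -/
theorem vnEntropy_subadditive {n m : ℕ}
    (ρ : Matrix (Fin n × Fin m) (Fin n × Fin m) ℂ) (hρ : IsDensityMatrix ρ) :
    vnEntropy ρ ≤ vnEntropy (ptrace₂ ρ) + vnEntropy (ptrace₁ ρ) := by
  obtain ⟨hρ_psd, hρ_trace⟩ := hρ
  have h₁ := hρ_psd.1.ptrace₂
  have h₂ := hρ_psd.1.ptrace₁
  set U₁ := h₁.eigenvectorUnitary
  set U₂ := h₂.eigenvectorUnitary
  set V : Matrix (Fin n × Fin m) (Fin n × Fin m) ℂ := ↑U₁ ⊗ₖ ↑U₂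
  have hV : V ∈ unitary _ := kronecker_mem_unitary U₁.prop U₂.prop
  set p := fun x => ((star V * ρ * V) x x).re
  have hp : ∀ x, 0 ≤ p x := fun x =>
    (Complex.nonneg_iff.mp (hρ_psd.conjTranspose_mul_mul_same V).diag_nonneg).1
  have hp_sum : ∑ x, p x = 1 := by
    have h : (star V * ρ * V).trace = 1 := by
      rw [trace_mul_cycle, Unitary.mul_star_self_of_mem hV, one_mul, hρ_trace]
    rw [← Complex.re_sum]
    exact (congrArg Complex.re h).trans Complex.one_re
  have hS₁ : vnEntropy (ptrace₂ ρ) = ∑ i, negMulLog (∑ j, p (i, j)) := by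
    rw [h₁.vnEntropy_eq_sum_negMulLog_diag, ← ptrace₂_star_kronecker_mul_mul_kronecker _ U₂.prop]
    simp only [ptrace₂, of_apply, Complex.re_sum]
    rfl
  have hS₂ : vnEntropy (ptrace₁ ρ) = ∑ j, negMulLog (∑ i, p (i, j)) := by
    rw [h₂.vnEntropy_eq_sum_negMulLog_diag, ← ptrace₁_star_kronecker_mul_mul_kronecker U₁.prop]
    simp only [ptrace₁, of_apply, Complex.re_sum]
    rfl
  rw [hS₁, hS₂]
  exact (hρ_psd.vnEntropy_le_sum_negMulLog_diag hV).trans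
    (sum_negMulLog_le_sum_negMulLog_marginals p hp hp_sum)
end

section
/- The entanglement of purification of a product state vanishes: if ρ = ρ₁ ⊗ ρ₂ for density matrices ρ₁ on ℂ^{n₁} and ρ₂ on ℂ^{n₂}, then E_P(ρ) = 0. -/
open scoped Kronecker ComplexOrder

/-- Partial trace over the two ancilla factors `ℂ^{m₁} ⊗ ℂ^{m₂}` of a matrix on
`(ℂ^{n₁} ⊗ ℂ^{m₁}) ⊗ (ℂ^{n₂} ⊗ ℂ^{m₂})`, giving a matrix on `ℂ^{n₁} ⊗ ℂ^{n₂}`. -/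
noncomputable def ptraceAnc {n₁ m₁ n₂ m₂ : ℕ}
    (σ : Matrix ((Fin n₁ × Fin m₁) × (Fin n₂ × Fin m₂))
      ((Fin n₁ × Fin m₁) × (Fin n₂ × Fin m₂)) ℂ) :
    Matrix (Fin n₁ × Fin n₂) (Fin n₁ × Fin n₂) ℂ :=
  Matrix.of fun p q => ∑ j₁ : Fin m₁, ∑ j₂ : Fin m₂,
    σ ((p.1, j₁), (p.2, j₂)) ((q.1, j₁), (q.2, j₂))

/-- The entanglement of purification `E_P(ρ)`: the infimum of
`S(Tr_{A₂A'₂} |ψ⟩⟨ψ|)` over all purifications `ψ` of `ρ` in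
`(ℂ^{n₁} ⊗ ℂ^{m₁}) ⊗ (ℂ^{n₂} ⊗ ℂ^{m₂})`. -/
noncomputable def entPurification {n₁ n₂ : ℕ}
    (ρ : Matrix (Fin n₁ × Fin n₂) (Fin n₁ × Fin n₂) ℂ) : ℝ :=
  sInf {x : ℝ | ∃ (m₁ m₂ : ℕ), 1 ≤ m₁ ∧ 1 ≤ m₂ ∧
    ∃ ψ : (Fin n₁ × Fin m₁) × (Fin n₂ × Fin m₂) → ℂ,
      (∑ z, ‖ψ z‖ ^ 2 = 1) ∧ ptraceAnc (outerProd ψ) = ρ ∧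
      x = vnEntropy (ptrace₂ (outerProd ψ))}

/-
Purify `ρᵢ` by `vec √ρᵢ`, the vector with entries `(√ρᵢ)ⱼₖ` on `Aᵢ ⊗ A'ᵢ`, where the ancilla
`A'ᵢ` is a copy of `Aᵢ`: its reduced state on `Aᵢ` is `√ρᵢ √ρᵢᴴ = ρᵢ`. The product
`vec √ρ₁ ⊗ vec √ρ₂` then purifies `ρ₁ ⊗ ρ₂`, and tracing out `A₂A'₂` leaves the pure state
`|vec √ρ₁⟩⟨vec √ρ₁|`, of entropy `0`. Conversely `E_P ≥ 0`, since every candidate value is the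
entropy of a density matrix.
-/

open Matrix
open scoped MatrixOrder

section Entropy

variable {d : Type*} [Fintype d] [DecidableEq d]

theorem IsDensityMatrix.vnEntropy_nonneg {ρ : Matrix d d ℂ} (hρ : IsDensityMatrix ρ) :
    0 ≤ vnEntropy ρ := by
  obtain ⟨hpsd, htr⟩ := hρ
  have hsum : ∑ i, hpsd.isHermitian.eigenvalues i = 1 := by
    have := hpsd.isHermitian.trace_eq_sum_eigenvalues
    rw [htr, ← RCLike.ofReal_sum] at this
    exact RCLike.ofReal_injective (this.symm.trans RCLike.ofReal_one.symm)
  rw [vnEntropy, dif_pos hpsd.isHermitian]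
  refine Finset.sum_nonneg fun i _ => Real.negMulLog_nonneg (hpsd.eigenvalues_nonneg i) ?_
  exact hsum ▸ Finset.single_le_sum (fun j _ => hpsd.eigenvalues_nonneg j) (Finset.mem_univ i)

theorem vnEntropy_eq_zero_of_isIdempotentElem {P : Matrix d d ℂ} (hP : P.IsHermitian)
    (hPP : IsIdempotentElem P) : vnEntropy P = 0 := by
  rw [vnEntropy, dif_pos hP]
  refine Finset.sum_eq_zero fun i _ => ?_
  rcases hPP.spectrum_subset ℝ (hP.eigenvalues_mem_spectrum_real i) with h | h <;>
    simp [Set.mem_singleton_iff.mp h]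

end Entropy

section OuterProduct

variable {d : Type*} [Fintype d]

theorem trace_outerProd (φ : d → ℂ) : (outerProd φ).trace = ((∑ z, ‖φ z‖ ^ 2 : ℝ) : ℂ) := by
  rw [outerProd, trace_vecMulVec, dotProduct, Complex.ofReal_sum]
  exact Finset.sum_congr rfl fun z _ => by rw [Complex.ofReal_pow]; exact RCLike.mul_conj (φ z)

theorem trace_outerProd_eq_one_iff (φ : d → ℂ) :
    (outerProd φ).trace = 1 ↔ ∑ z, ‖φ z‖ ^ 2 = 1 := by
  rw [trace_outerProd]
  exact_mod_cast Iff.rfl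

theorem isIdempotentElem_outerProd {φ : d → ℂ} (hφ : (outerProd φ).trace = 1) :
    IsIdempotentElem (outerProd φ) := by
  rw [outerProd, trace_vecMulVec] at hφ
  rw [IsIdempotentElem, outerProd, vecMulVec_mul_vecMulVec, ← dotProduct_comm, hφ, one_smul]

theorem vnEntropy_outerProd [DecidableEq d] {φ : d → ℂ} (hφ : (outerProd φ).trace = 1) :
    vnEntropy (outerProd φ) = 0 :=
  vnEntropy_eq_zero_of_isIdempotentElem (posSemidef_vecMulVec_self_star φ).isHermitian
    (isIdempotentElem_outerProd hφ)

theorem outerProd_mul {α β : Type*} (φ : α → ℂ) (χ : β → ℂ) :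
    outerProd (fun z : α × β => φ z.1 * χ z.2) = outerProd φ ⊗ₖ outerProd χ := by
  ext z w
  simp only [outerProd, vecMulVec_apply, kroneckerMap_apply, Pi.star_apply, star_mul']
  ring

end OuterProduct

section PartialTrace

variable {α β : Type*} [Fintype β]

theorem ptrace₂_outerProd (ψ : α × β → ℂ) :
    ptrace₂ (outerProd ψ) = of (Function.curry ψ) * (of (Function.curry ψ))ᴴ := by
  ext a a'
  simp [ptrace₂, outerProd, mul_apply, vecMulVec_apply]

theorem trace_ptrace₂ [Fintype α] (σ : Matrix (α × β) (α × β) ℂ) :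
    (ptrace₂ σ).trace = σ.trace := by
  simp [trace, ptrace₂, Fintype.sum_prod_type]

theorem ptrace₂_kronecker (A : Matrix α α ℂ) (B : Matrix β β ℂ) :
    ptrace₂ (A ⊗ₖ B) = B.trace • A := by
  ext a a'
  simp [ptrace₂, trace, ← Finset.mul_sum, mul_comm]

theorem isDensityMatrix_ptrace₂_outerProd [Fintype α] {ψ : α × β → ℂ}
    (hψ : ∑ z, ‖ψ z‖ ^ 2 = 1) : IsDensityMatrix (ptrace₂ (outerProd ψ)) :=
  ⟨ptrace₂_outerProd ψ ▸ posSemidef_self_mul_conjTranspose _,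
    by rw [trace_ptrace₂, trace_outerProd_eq_one_iff, hψ]⟩

theorem vnEntropy_ptrace₂_outerProd_nonneg [Fintype α] [DecidableEq α] {ψ : α × β → ℂ}
    (hψ : ∑ z, ‖ψ z‖ ^ 2 = 1) : 0 ≤ vnEntropy (ptrace₂ (outerProd ψ)) :=
  (isDensityMatrix_ptrace₂_outerProd hψ).vnEntropy_nonneg

theorem ptrace₂_outerProd_sqrt {d : Type*} [Fintype d] [DecidableEq d] {ρ : Matrix d d ℂ}
    (hρ : ρ.PosSemidef) :
    ptrace₂ (outerProd fun p : d × d => CFC.sqrt ρ p.1 p.2) = ρ := by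
  rw [ptrace₂_outerProd]
  change CFC.sqrt ρ * (CFC.sqrt ρ)ᴴ = ρ
  rw [(CFC.sqrt_nonneg ρ).posSemidef.isHermitian.eq, CFC.sqrt_mul_sqrt_self ρ hρ.nonneg]

theorem ptraceAnc_kronecker {n₁ m₁ n₂ m₂ : ℕ} (A : Matrix (Fin n₁ × Fin m₁) (Fin n₁ × Fin m₁) ℂ)
    (B : Matrix (Fin n₂ × Fin m₂) (Fin n₂ × Fin m₂) ℂ) :
    ptraceAnc (A ⊗ₖ B) = ptrace₂ A ⊗ₖ ptrace₂ B := by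
  ext p q
  simp [ptraceAnc, ptrace₂, Finset.sum_mul_sum]

end PartialTrace

section EntanglementOfPurification

variable {n₁ n₂ : ℕ}

theorem entPurification_nonneg (ρ : Matrix (Fin n₁ × Fin n₂) (Fin n₁ × Fin n₂) ℂ) :
    0 ≤ entPurification ρ :=
  Real.sInf_nonneg fun _ ⟨_, _, _, _, _, hψ, _, hx⟩ =>
    hx ▸ vnEntropy_ptrace₂_outerProd_nonneg hψ

theorem entPurification_le {ρ : Matrix (Fin n₁ × Fin n₂) (Fin n₁ × Fin n₂) ℂ} {m₁ m₂ : ℕ}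
    (hm₁ : 1 ≤ m₁) (hm₂ : 1 ≤ m₂) {ψ : (Fin n₁ × Fin m₁) × (Fin n₂ × Fin m₂) → ℂ}
    (hψ : ∑ z, ‖ψ z‖ ^ 2 = 1) (hψρ : ptraceAnc (outerProd ψ) = ρ) :
    entPurification ρ ≤ vnEntropy (ptrace₂ (outerProd ψ)) :=
  csInf_le ⟨0, fun _ ⟨_, _, _, _, _, hψ', _, hx⟩ => hx ▸ vnEntropy_ptrace₂_outerProd_nonneg hψ'⟩
    ⟨m₁, m₂, hm₁, hm₂, ψ, hψ, hψρ, rfl⟩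

end EntanglementOfPurification

/-- The entanglement of purification of a product state vanishes. -/
theorem entPurification_of_product_eq_zero {n₁ n₂ : ℕ}
    (ρ₁ : Matrix (Fin n₁) (Fin n₁) ℂ) (ρ₂ : Matrix (Fin n₂) (Fin n₂) ℂ)
    (hρ₁ : IsDensityMatrix ρ₁) (hρ₂ : IsDensityMatrix ρ₂) :
    entPurification (ρ₁ ⊗ₖ ρ₂) = 0 := by
  obtain ⟨hpsd₁, htr₁⟩ := hρ₁
  obtain ⟨hpsd₂, htr₂⟩ := hρ₂
  have hn₁ : 1 ≤ n₁ := Nat.pos_of_ne_zero (by rintro rfl; simp [trace] at htr₁)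
  have hn₂ : 1 ≤ n₂ := Nat.pos_of_ne_zero (by rintro rfl; simp [trace] at htr₂)
  set φ₁ : Fin n₁ × Fin n₁ → ℂ := fun p => CFC.sqrt ρ₁ p.1 p.2
  set φ₂ : Fin n₂ × Fin n₂ → ℂ := fun p => CFC.sqrt ρ₂ p.1 p.2
  have hφ₁ : ptrace₂ (outerProd φ₁) = ρ₁ := ptrace₂_outerProd_sqrt hpsd₁
  have hφ₂ : ptrace₂ (outerProd φ₂) = ρ₂ := ptrace₂_outerProd_sqrt hpsd₂
  have htrφ₁ : (outerProd φ₁).trace = 1 := by rw [← trace_ptrace₂, hφ₁, htr₁]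
  have htrφ₂ : (outerProd φ₂).trace = 1 := by rw [← trace_ptrace₂, hφ₂, htr₂]
  have hψ := outerProd_mul φ₁ φ₂
  refine le_antisymm ?_ (entPurification_nonneg _)
  calc entPurification (ρ₁ ⊗ₖ ρ₂)
      ≤ vnEntropy (ptrace₂ (outerProd fun z => φ₁ z.1 * φ₂ z.2)) :=
        entPurification_le hn₁ hn₂
          (by rw [← trace_outerProd_eq_one_iff, hψ, trace_kronecker, htrφ₁, htrφ₂, one_mul])
          (by rw [hψ, ptraceAnc_kronecker, hφ₁, hφ₂])
    _ = 0 := by rw [hψ, ptrace₂_kronecker, htrφ₂, one_smul, vnEntropy_outerProd htrφ₁]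
end
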